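/- Fix a natural number i and t ∈ F, and define the sequence (a_n) by a_n = (-1)^n [n choose i]_q t^{n-i} q^{i(i-1)/2} for n ≥ i and a_n = 0 for n < i. Then its q-dual sequence satisfies a*_n = [n choose i]_q (-q^i t; q)_{n-i} q^{i^2 - i} for n ≥ i, and a*_n = 0 for n < i. -/
import Mathlib


open Finset

/-- The q-Pochhammer symbol `(a;q)_n = ∏_{j=0}^{n-1} (1 - a q^j)`. -/
def qPoch {F : Type*} [Field F] (q a : F) (n : ℕ) : F :=
  ∏ j ∈ Finset.range n, (1 - a * q ^ j)

/-- The q-binomial coefficient `[n choose i]_q`, equal to 0 when `i > n`. -/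
def qBinom {F : Type*} [Field F] (q : F) (n i : ℕ) : F :=
  if i ≤ n then qPoch q q n / (qPoch q q i * qPoch q q (n - i)) else 0

/-- The q-integer `[n]_q = (1-q^n)/(1-q)`. -/
def qInt {F : Type*} [Field F] (q : F) (n : ℕ) : F := (1 - q ^ n) / (1 - q)

/-- The q-dual sequence `a*_n = ∑_{i=0}^n (-1)^i [n choose i]_q q^{i(i-1)/2} a_i`. -/
def qDual {F : Type*} [Field F] (q : F) (a : ℕ → F) (n : ℕ) : F :=
  ∑ i ∈ Finset.range (n + 1), (-1 : F) ^ i * qBinom q n i * q ^ (i.choose 2) * a i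

section Aux

variable {F : Type*} [Field F] {q : F}

lemma qPoch_zero' (a : F) : qPoch q a 0 = 1 := by simp [qPoch]

lemma qPoch_succ' (a : F) (n : ℕ) : qPoch q a (n + 1) = qPoch q a n * (1 - a * q ^ n) :=
  Finset.prod_range_succ _ _

lemma fac_ne (hq : ∀ m : ℕ, 0 < m → q ^ m ≠ 1) (j : ℕ) : (1 : F) - q * q ^ j ≠ 0 := by
  intro h
  exact hq (j + 1) j.succ_pos (by rw [pow_succ']; linear_combination -h)

lemma qPoch_ne (hq : ∀ m : ℕ, 0 < m → q ^ m ≠ 1) (n : ℕ) : qPoch q q n ≠ 0 := by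
  unfold qPoch
  exact Finset.prod_ne_zero_iff.2 fun j _ => fac_ne hq j

lemma qBinom_self (hq : ∀ m : ℕ, 0 < m → q ^ m ≠ 1) (n : ℕ) : qBinom q n n = 1 := by
  rw [qBinom, if_pos le_rfl, Nat.sub_self, qPoch_zero', mul_one]
  exact div_self (qPoch_ne hq n)

lemma qBinom_zero (hq : ∀ m : ℕ, 0 < m → q ^ m ≠ 1) (n : ℕ) : qBinom q n 0 = 1 := by
  rw [qBinom, if_pos (Nat.zero_le n), Nat.sub_zero, qPoch_zero', one_mul]
  exact div_self (qPoch_ne hq n)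

lemma qBinom_gt {n i : ℕ} (h : n < i) : qBinom q n i = 0 := by
  rw [qBinom, if_neg (by omega)]

lemma qBinom_pascal (hq : ∀ m : ℕ, 0 < m → q ^ m ≠ 1) (m j : ℕ) (hj : j ≤ m) :
    qBinom q (m + 1) (j + 1) = qBinom q m (j + 1) + q ^ (m - j) * qBinom q m j := by
  have hP := qPoch_ne (q := q) hq
  rcases eq_or_lt_of_le hj with rfl | h
  · rw [qBinom_self hq, qBinom_self hq, qBinom_gt (by omega), Nat.sub_self]
    simp
  · obtain ⟨e, rfl⟩ : ∃ e, m = j + 1 + e := ⟨m - (j + 1), by omega⟩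
    rw [qBinom, if_pos (by omega), qBinom, if_pos (by omega), qBinom, if_pos (by omega)]
    have h1 : j + 1 + e + 1 - (j + 1) = e + 1 := by omega
    have h2 : j + 1 + e - (j + 1) = e := by omega
    have h3 : j + 1 + e - j = e + 1 := by omega
    rw [h1, h2, h3]
    have e1 : qPoch q q (j + 1 + e + 1) = qPoch q q (j + 1 + e) * (1 - q * q ^ (j + 1 + e)) :=
      qPoch_succ' q _
    have e2 : qPoch q q (j + 1) = qPoch q q j * (1 - q * q ^ j) := qPoch_succ' q _
    have e3 : qPoch q q (e + 1) = qPoch q q e * (1 - q * q ^ e) := qPoch_succ' q _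
    rw [e1, e2, e3]
    field_simp [hP j, hP e, fac_ne hq j, fac_ne hq e]
    ring

lemma choose_two_succ (n : ℕ) : (n + 1).choose 2 = n.choose 2 + n := by
  rw [Nat.choose_succ_succ, Nat.choose_one_right, Nat.add_comm]

lemma two_choose_two (i : ℕ) : i.choose 2 + i.choose 2 = i ^ 2 - i := by
  induction i with
  | zero => simp
  | succ i ih =>
    rw [choose_two_succ]
    have h1 : (i + 1) ^ 2 = i ^ 2 + 2 * i + 1 := by ring
    have h2 : i ≤ i ^ 2 := Nat.le_self_pow two_ne_zero i
    omega

lemma choose_two_add (i j : ℕ) :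
    (i + j).choose 2 + i.choose 2 = (i ^ 2 - i) + (j.choose 2 + i * j) := by
  induction j with
  | zero => simpa using two_choose_two i
  | succ j ih =>
    have h1 : i + (j + 1) = (i + j) + 1 := by ring
    rw [h1, choose_two_succ, choose_two_succ]
    have hm : i * (j + 1) = i * j + i := by ring
    omega

/-- q-binomial theorem. -/
lemma qbt (hq : ∀ m : ℕ, 0 < m → q ^ m ≠ 1) (x : F) (m : ℕ) :
    ∑ j ∈ range (m + 1), qBinom q m j * q ^ (j.choose 2) * x ^ j = qPoch q (-x) m := by
  induction m with
  | zero => simp [qBinom_self hq, qPoch_zero']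
  | succ m ih =>
    rw [Finset.sum_range_succ' _ (m + 1)]
    have step : ∀ j ∈ range (m + 1),
        qBinom q (m + 1) (j + 1) * q ^ ((j + 1).choose 2) * x ^ (j + 1)
        = qBinom q m (j + 1) * q ^ ((j + 1).choose 2) * x ^ (j + 1)
          + (x * q ^ m) * (qBinom q m j * q ^ (j.choose 2) * x ^ j) := by
      intro j hj
      rw [mem_range] at hj
      have hq2 : q ^ (m - j) * q ^ ((j + 1).choose 2) = q ^ m * q ^ (j.choose 2) := by
        rw [choose_two_succ, ← pow_add, ← pow_add]
        congr 1
        omega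
      calc qBinom q (m + 1) (j + 1) * q ^ ((j + 1).choose 2) * x ^ (j + 1)
          = (qBinom q m (j + 1) + q ^ (m - j) * qBinom q m j) * q ^ ((j + 1).choose 2)
              * x ^ (j + 1) := by rw [qBinom_pascal hq m j (by omega)]
        _ = qBinom q m (j + 1) * q ^ ((j + 1).choose 2) * x ^ (j + 1)
              + (q ^ (m - j) * q ^ ((j + 1).choose 2)) * (qBinom q m j * x ^ (j + 1)) := by
            ring
        _ = _ := by rw [hq2]; ring
    rw [Finset.sum_congr rfl step, Finset.sum_add_distrib, ← Finset.mul_sum, ih]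
    have hfirst : (∑ j ∈ range (m + 1),
        qBinom q m (j + 1) * q ^ ((j + 1).choose 2) * x ^ (j + 1))
        + qBinom q (m + 1) 0 * q ^ (Nat.choose 0 2) * x ^ 0 = qPoch q (-x) m := by
      rw [qBinom_zero hq]
      have := (Finset.sum_range_succ' (fun j => qBinom q m j * q ^ (j.choose 2) * x ^ j)
        (m + 1)).symm
      simp only [qBinom_zero hq] at this
      rw [this, Finset.sum_range_succ, qBinom_gt (by omega), ih]
      ring
    rw [qPoch_succ']
    linear_combination hfirst + (x * q ^ m) * (by ring : qPoch q (-x) m = qPoch q (-x) m)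

lemma qBinom_mul (hq : ∀ m : ℕ, 0 < m → q ^ m ≠ 1) (i j d : ℕ) (hj : j ≤ d) :
    qBinom q (i + d) (i + j) * qBinom q (i + j) i = qBinom q (i + d) i * qBinom q d j := by
  have hP := qPoch_ne (q := q) hq
  obtain ⟨e, rfl⟩ : ∃ e, d = j + e := ⟨d - j, by omega⟩
  rw [qBinom, if_pos (by omega), qBinom, if_pos (by omega), qBinom, if_pos (by omega),
    qBinom, if_pos (by omega)]
  have h1 : i + (j + e) - (i + j) = e := by omega
  have h2 : i + j - i = j := by omega
  have h3 : i + (j + e) - i = j + e := by omega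
  have h4 : j + e - j = e := by omega
  rw [h1, h2, h3, h4]
  rw [div_mul_div_comm, div_mul_div_comm,
    div_eq_div_iff
      (mul_ne_zero (mul_ne_zero (hP _) (hP _)) (mul_ne_zero (hP _) (hP _)))
      (mul_ne_zero (mul_ne_zero (hP _) (hP _)) (mul_ne_zero (hP _) (hP _)))]
  ring

end Aux

theorem stmt17 {F : Type*} [Field F] (q : F) (hq0 : q ≠ 0)
    (hq : ∀ m : ℕ, 0 < m → q ^ m ≠ 1) (i : ℕ) (t : F) (a : ℕ → F)
    (ha : ∀ n : ℕ, a n =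
      if i ≤ n then (-1 : F) ^ n * qBinom q n i * t ^ (n - i) * q ^ (i.choose 2) else 0) :
    ∀ n : ℕ, qDual q a n =
      if i ≤ n then qBinom q n i * qPoch q (-(q ^ i * t)) (n - i) * q ^ (i ^ 2 - i)
      else 0 := by
  intro n
  by_cases hn : i ≤ n
  · rw [if_pos hn]
    obtain ⟨d, rfl⟩ : ∃ d, n = i + d := ⟨n - i, by omega⟩
    unfold qDual
    rw [show i + d + 1 = i + (d + 1) from rfl, Finset.sum_range_add]
    have hzero : ∑ k ∈ range i, (-1 : F) ^ k * qBinom q (i + d) k * q ^ (k.choose 2) * a k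
        = 0 := by
      refine Finset.sum_eq_zero fun k hk => ?_
      rw [mem_range] at hk
      rw [ha k, if_neg (by omega)]
      ring
    rw [hzero, zero_add]
    have hterm : ∀ j ∈ range (d + 1),
        (-1 : F) ^ (i + j) * qBinom q (i + d) (i + j) * q ^ ((i + j).choose 2) * a (i + j)
        = (qBinom q (i + d) i * q ^ (i ^ 2 - i))
            * (qBinom q d j * q ^ (j.choose 2) * (q ^ i * t) ^ j) := by
      intro j hj
      rw [mem_range] at hj
      rw [ha (i + j), if_pos (by omega), show i + j - i = j from by omega]
      have hsign : (-1 : F) ^ (i + j) * (-1 : F) ^ (i + j) = 1 := by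
        rw [← pow_add]
        exact Even.neg_one_pow ⟨i + j, by ring⟩
      have hpow : q ^ ((i + j).choose 2) * q ^ (i.choose 2)
          = q ^ (i ^ 2 - i) * (q ^ (j.choose 2) * q ^ (i * j)) := by
        rw [← pow_add, ← pow_add, ← pow_add, choose_two_add]
      have hmul := qBinom_mul hq i j d (by omega)
      have hx : (q ^ i * t) ^ j = q ^ (i * j) * t ^ j := by
        rw [mul_pow, ← pow_mul]
      calc (-1 : F) ^ (i + j) * qBinom q (i + d) (i + j) * q ^ ((i + j).choose 2)
              * ((-1 : F) ^ (i + j) * qBinom q (i + j) i * t ^ j * q ^ (i.choose 2))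
          = ((-1 : F) ^ (i + j) * (-1 : F) ^ (i + j))
              * (qBinom q (i + d) (i + j) * qBinom q (i + j) i)
              * (q ^ ((i + j).choose 2) * q ^ (i.choose 2)) * t ^ j := by ring
        _ = (qBinom q (i + d) i * qBinom q d j)
              * (q ^ (i ^ 2 - i) * (q ^ (j.choose 2) * q ^ (i * j))) * t ^ j := by
            rw [hsign, hmul, hpow]; ring
        _ = _ := by rw [hx]; ring
    rw [Finset.sum_congr rfl hterm, ← Finset.mul_sum, qbt hq]
    rw [show i + d - i = d from by omega]
    ring
  · rw [if_neg hn]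
    unfold qDual
    refine Finset.sum_eq_zero fun k hk => ?_
    rw [mem_range] at hk
    rw [ha k, if_neg (by omega)]
    ring
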